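/- Let $a_1,\ldots,a_n$ be distinct elements of a field $F$ and write $\prod_{i=1}^n(x-a_i) = \sum_{j=0}^n c_j x^{n-j}$. Let $C$ be the $n\times n$ matrix with $(i,j)$ entry $c_{n-1-i-j}$ for $i+j \leq n-1$ and $0$ otherwise (indices from $0$), let $V_n = (a_j^i)$, $V_0 = \mathrm{diag}(v_1,\ldots,v_n)$, $U = \mathrm{diag}(u_1/v_1,\ldots,u_n/v_n)$ with $u_i = \prod_{j\neq i}(a_i-a_j)^{-1}$ and $v_i \in F^*$. Then $V_n V_0 U V_n^{\mathrm{T}} C^{\mathrm{T}} = I_n$. -/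

import Mathlib

/-!
The Lagrange basis polynomial at the node `aⱼ` is `Lⱼ = uⱼ · p(X) / (X - aⱼ)` with
`p = ∏ᵢ (X - aᵢ)`, and synthetic division shows that its coefficient of `X^l` is
`uⱼ · ∑ₖ C_{l k} aⱼ^k`. Since `V_0 U = diag(u)`, the `(i, l)` entry of the product is
`∑ⱼ aⱼ^i · [X^l] Lⱼ = [X^l] X^i = δ_{il}`, because Lagrange interpolation reproduces `X^i`
for `i < n`.
-/

open Polynomial Finset

namespace Lagrange

variable {F : Type*} [Field F] {ι : Type*} [DecidableEq ι] {s : Finset ι} {v : ι → F}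

theorem coeff_basis {i : ι} (hi : i ∈ s) (l : ℕ) :
    (Lagrange.basis s v i).coeff l =
      nodalWeight s v i * ∑ t ∈ Icc (l + 1) #s, v i ^ (t - (l + 1)) * (nodal s v).coeff t := by
  rw [basis_eq_prod_sub_inv_mul_nodal_div hi, coeff_C_mul,
    ← divByMonic_eq_div _ (monic_X_sub_C _), coeff_divByMonic_X_sub_C, natDegree_nodal]

theorem coeff_eq_sum_eval_mul_coeff_basis (hvs : Set.InjOn v s) {f : F[X]}
    (hf : f.degree < #s) (l : ℕ) :
    f.coeff l = ∑ i ∈ s, f.eval (v i) * (Lagrange.basis s v i).coeff l := by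
  conv_lhs => rw [eq_interpolate hvs hf]
  simp only [interpolate_apply, finsetSum_coeff, coeff_C_mul]

end Lagrange

theorem Polynomial.coeff_eq_of_eq_sum_C_mul_X_pow_sub {R : Type*} [Semiring R] {p : R[X]}
    {n : ℕ} {c : ℕ → R} (hp : p = ∑ j ∈ range (n + 1), C (c j) * X ^ (n - j)) {t : ℕ}
    (ht : t ≤ n) : p.coeff t = c (n - t) := by
  rw [hp, finsetSum_coeff, sum_eq_single (n - t)]
  · simp [Nat.sub_sub_self ht]
  · intro j hj hjt
    rw [coeff_C_mul_X_pow, if_neg (by simp at hj; omega)]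
  · simp

theorem sum_pow_mul_hankel_eq_sum_Icc {R : Type*} [CommSemiring R] (n l : ℕ) (c : ℕ → R)
    (y : R) :
    ∑ k : Fin n, y ^ (k : ℕ) * (if l + k ≤ n - 1 then c (n - 1 - l - k) else 0) =
      ∑ t ∈ Icc (l + 1) n, y ^ (t - (l + 1)) * c (n - t) := by
  rw [Fin.sum_univ_eq_sum_range (fun k => y ^ k * if l + k ≤ n - 1 then c (n - 1 - l - k) else 0),
    ← Ico_add_one_right_eq_Icc, sum_Ico_eq_sum_range, Nat.add_sub_add_right,
    ← sum_subset (range_subset_range.mpr (Nat.sub_le n l))]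
  · refine sum_congr rfl fun k hk => ?_
    rw [mem_range] at hk
    rw [if_pos (by omega), Nat.add_sub_cancel_left, show n - (l + 1 + k) = n - 1 - l - k by omega]
  · intro k hkn hk
    rw [mem_range] at hkn hk
    rw [if_neg (by omega), mul_zero]

open Polynomial Matrix in
/-- The identity `V_n V_0 U V_nᵀ Cᵀ = I_n` from the proof of Theorem 3. -/
theorem stmt_15 {F : Type*} [Field F] (n : ℕ)
    (a : Fin n → F) (ha : Function.Injective a)
    (v : Fin n → F) (hv : ∀ i, v i ≠ 0)
    (u : Fin n → F)
    (hu : ∀ i, u i = (∏ j ∈ Finset.univ.erase i, (a i - a j))⁻¹)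
    (c : ℕ → F)
    (hc : (∏ i : Fin n, (X - Polynomial.C (a i))) =
      ∑ j ∈ Finset.range (n + 1), Polynomial.C (c j) * X ^ (n - j))
    (Vn : Matrix (Fin n) (Fin n) F) (hVn : ∀ i j, Vn i j = a j ^ (i : ℕ))
    (Cm : Matrix (Fin n) (Fin n) F)
    (hCm : ∀ i j, Cm i j =
      if (i : ℕ) + (j : ℕ) ≤ n - 1 then c (n - 1 - (i : ℕ) - (j : ℕ)) else 0) :
    Vn * Matrix.diagonal v * Matrix.diagonal (fun i => u i / v i) * Vnᵀ * Cmᵀ = 1 := by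
  have hdiag : diagonal v * diagonal (fun i => u i / v i) = diagonal u := by
    rw [diagonal_mul_diagonal]
    congr 1 with i
    exact mul_div_cancel₀ _ (hv i)
  have hbasis : ∀ j l : Fin n, u j * (Vnᵀ * Cmᵀ) j l =
      (Lagrange.basis univ a j).coeff l := by
    intro j l
    have hnodal : ∀ t ≤ n, (Lagrange.nodal univ a).coeff t = c (n - t) :=
      fun t => coeff_eq_of_eq_sum_C_mul_X_pow_sub hc
    rw [Lagrange.coeff_basis (mem_univ j), card_univ, Fintype.card_fin, Lagrange.nodalWeight,
      prod_inv_distrib, ← hu, sum_congr rfl fun t ht => by rw [hnodal t (mem_Icc.mp ht).2],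
      ← sum_pow_mul_hankel_eq_sum_Icc]
    simp only [Matrix.mul_apply, transpose_apply, hVn, hCm]
  rw [Matrix.mul_assoc Vn, hdiag, Matrix.mul_assoc]
  ext i l
  have hdeg : (X ^ (i : ℕ) : F[X]).degree < #(univ : Finset (Fin n)) := by
    rw [degree_X_pow, card_univ, Fintype.card_fin]
    exact_mod_cast i.isLt
  calc (Vn * diagonal u * (Vnᵀ * Cmᵀ)) i l
      = ∑ j, (X ^ (i : ℕ)).eval (a j) * (Lagrange.basis univ a j).coeff l := by
        rw [Matrix.mul_apply]
        refine sum_congr rfl fun j _ => ?_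
        rw [mul_diagonal, mul_assoc, hbasis, hVn, eval_pow, eval_X]
    _ = (X ^ (i : ℕ) : F[X]).coeff l :=
        (Lagrange.coeff_eq_sum_eval_mul_coeff_basis ha.injOn hdeg l).symm
    _ = (1 : Matrix (Fin n) (Fin n) F) i l := by
        rw [coeff_X_pow, one_apply]
        simp only [Fin.ext_iff, eq_comm]
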